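/- Let U be an ℵ₁-incomplete ultrafilter over κ and let m be a σ-additive probability measure on a σ-algebra of subsets of κ^ω containing all clopen sets. Then there is a U-null set X ⊆ κ^ω with m(X) = 1. -/

import Mathlib

universe u

namespace UMeas

variable {A : Type u}

/-- The first `n` values of an infinite sequence, as a list. -/
def seg (s : ℕ → A) (n : ℕ) : List A := List.ofFn (fun i : Fin n => s i)

/-- `T` is a `U`-branching tree: a set of finite sequences closed under initial
segments, containing the empty sequence, whose branching sets are in `U`. -/
def IsUTree (U : Ultrafilter A) (T : Set (List A)) : Prop :=
  ([] ∈ T) ∧ (∀ σ ∈ T, ∀ τ : List A, τ <+: σ → τ ∈ T) ∧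
    ∀ σ ∈ T, {a : A | σ ++ [a] ∈ T} ∈ U

/-- The set of infinite branches through `T`. -/
def branches (T : Set (List A)) : Set (ℕ → A) := {s | ∀ n, seg s n ∈ T}

/-- Concatenation `σ⌢s` of a finite sequence with an infinite sequence. -/
def app (σ : List A) (s : ℕ → A) : ℕ → A :=
  fun n => if h : n < σ.length then σ.get ⟨n, h⟩ else s (n - σ.length)

/-- The section `X↾σ = {s | σ⌢s ∈ X}`. -/
def sect (X : Set (ℕ → A)) (σ : List A) : Set (ℕ → A) := {s | app σ s ∈ X}

def ULarge (U : Ultrafilter A) (X : Set (ℕ → A)) : Prop :=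
  ∃ T, IsUTree U T ∧ branches T ⊆ X

def USmall (U : Ultrafilter A) (X : Set (ℕ → A)) : Prop :=
  ∃ T, IsUTree U T ∧ branches T ∩ X = ∅

def UDetermined (U : Ultrafilter A) (X : Set (ℕ → A)) : Prop :=
  ULarge U X ∨ USmall U X

def UNull (U : Ultrafilter A) (X : Set (ℕ → A)) : Prop :=
  ∀ σ : List A, USmall U (sect X σ)

def UMeasurable (U : Ultrafilter A) (X : Set (ℕ → A)) : Prop :=
  ∀ σ : List A, UDetermined U (sect X σ)

end UMeas

/-
Since `U` is countably incomplete, there are `g₀ ⊇ g₁ ⊇ ⋯` in `U` with empty intersection,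
so for every finite measure on `A` some member of `U` has arbitrarily small measure. Pulling `m`
back along the coordinate `s ↦ s j` yields `B j ∈ U` with `m {s | s j ∈ B j} ≤ 1/j`, so the set `Y`
of sequences eventually lying in `B j` is `m`-null. Its complement `X` is `U`-null: after any
prefix `σ`, the branches of the tree of sequences with `τᵢ ∈ B (|σ| + i)` land in `Y`.
-/

open MeasureTheory Filter Topology Set ENNReal

namespace UMeas

variable {A : Type u}

def boxTree (C : ℕ → Set A) : Set (List A) :=
  {τ | ∀ (i : ℕ) (h : i < τ.length), τ[i] ∈ C i}

theorem isUTree_boxTree {U : Ultrafilter A} {C : ℕ → Set A} (hC : ∀ n, C n ∈ U) :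
    IsUTree U (boxTree C) := by
  refine ⟨fun i h => absurd h (Nat.not_lt_zero i), ?_, ?_⟩
  · intro σ hσ τ hτσ i hi
    rw [hτσ.getElem hi]
    exact hσ i _
  · intro σ hσ
    filter_upwards [hC σ.length] with a ha i hi
    rcases Nat.lt_or_ge i σ.length with hi' | hi'
    · rw [List.getElem_append_left hi']
      exact hσ i hi'
    · obtain rfl : i = σ.length := by simp at hi; omega
      simpa using ha

theorem branches_boxTree (C : ℕ → Set A) : branches (boxTree C) = {s | ∀ i, s i ∈ C i} := by
  ext s
  simp only [branches, boxTree, seg, List.length_ofFn, List.getElem_ofFn, mem_ofPred_eq]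
  exact ⟨fun hs i => hs (i + 1) i i.lt_succ_self, fun hs _ i _ => hs i⟩

theorem app_length_add (σ : List A) (s : ℕ → A) (i : ℕ) : app σ s (σ.length + i) = s i := by
  simp [app]

theorem exists_antitone_iInter_eq_empty {U : Ultrafilter A}
    (hU : ∃ f : ℕ → Set A, (∀ n, f n ∈ U) ∧ (⋂ n, f n) ∉ U) :
    ∃ g : ℕ → Set A, Antitone g ∧ (∀ n, g n ∈ U) ∧ ⋂ n, g n = ∅ := by
  obtain ⟨f, hfU, hf⟩ := hU
  refine ⟨fun n => (⋂ k ≤ n, f k) \ ⋂ k, f k, ?_, ?_, ?_⟩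
  · intro a b hab
    exact sdiff_subset_sdiff_left (biInter_subset_biInter_left fun k hk => le_trans hk hab)
  · intro n
    refine sdiff_mem ((biInter_mem (finite_le_nat n)).2 fun k _ => hfU k) ?_
    exact Ultrafilter.compl_mem_iff_notMem.2 hf
  · refine eq_empty_of_forall_notMem fun x hx => ?_
    simp only [mem_iInter, Set.mem_sdiff] at hx
    exact (hx 0).2 fun k => (hx k).1 k le_rfl

theorem exists_mem_measure_preimage_le {Ω : Type*} [MeasurableSpace Ω] (μ : Measure Ω)
    [IsFiniteMeasure μ] {p : Ω → A} (hp : ∀ B, MeasurableSet (p ⁻¹' B)) {U : Ultrafilter A}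
    (hU : ∃ f : ℕ → Set A, (∀ n, f n ∈ U) ∧ (⋂ n, f n) ∉ U) {ε : ℝ≥0∞} (hε : ε ≠ 0) :
    ∃ B ∈ U, μ (p ⁻¹' B) ≤ ε := by
  obtain ⟨g, hg, hgU, hg0⟩ := exists_antitone_iInter_eq_empty hU
  have hlim : Tendsto (fun n => μ (p ⁻¹' g n)) atTop (𝓝 0) := by
    have := tendsto_measure_iInter_atTop (μ := μ) (fun n => (hp (g n)).nullMeasurableSet)
      (fun a b hab => preimage_mono (hg hab)) ⟨0, measure_ne_top μ _⟩
    rwa [← preimage_iInter, hg0, preimage_empty, measure_empty] at this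
  obtain ⟨n, hn⟩ := (hlim.eventually_lt_const (pos_iff_ne_zero.2 hε)).exists
  exact ⟨g n, hgU n, hn.le⟩

theorem measure_eventually_mem_eq_zero {Ω : Type*} [MeasurableSpace Ω] (μ : Measure Ω)
    {E : ℕ → Set Ω} (hE : Tendsto (fun n => μ (E n)) atTop (𝓝 0)) :
    μ {ω | ∀ᶠ n in atTop, ω ∈ E n} = 0 := by
  have hunion : {ω | ∀ᶠ n in atTop, ω ∈ E n} = ⋃ k, ⋂ n ≥ k, E n := by
    ext ω; simp [eventually_atTop]
  rw [hunion, measure_iUnion_null_iff]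
  intro k
  refine le_antisymm (ge_of_tendsto hE ?_) zero_le
  filter_upwards [eventually_ge_atTop k] with n hn
  exact measure_mono (biInter_subset_of_mem hn)

end UMeas

theorem stmt11 {A : Type u} [TopologicalSpace A] [DiscreteTopology A]
    {m0 : MeasurableSpace (ℕ → A)} (U : Ultrafilter A)
    (hU : ∃ f : ℕ → Set A, (∀ n, f n ∈ U) ∧ (⋂ n, f n) ∉ U)
    (m : MeasureTheory.Measure (ℕ → A)) [MeasureTheory.IsProbabilityMeasure m]
    (hm : ∀ s : Set (ℕ → A), IsClopen s → MeasurableSet s) :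
    ∃ X : Set (ℕ → A), UMeas.UNull U X ∧ m X = 1 := by
  have hcoord : ∀ j (B : Set A), MeasurableSet {s : ℕ → A | s j ∈ B} := fun j B =>
    hm _ ((isClopen_discrete B).preimage (continuous_apply j))
  choose B hBU hBm using fun j : ℕ =>
    UMeas.exists_mem_measure_preimage_le m (hcoord j) hU (ENNReal.inv_ne_zero.2 (natCast_ne_top j))
  set Y := {s : ℕ → A | ∀ᶠ j in atTop, s j ∈ B j}
  have hY : m Y = 0 := UMeas.measure_eventually_mem_eq_zero m <|
    tendsto_of_tendsto_of_tendsto_of_le_of_le tendsto_const_nhds ENNReal.tendsto_inv_nat_nhds_zero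
      (fun _ => zero_le) hBm
  refine ⟨Yᶜ, fun σ => ⟨UMeas.boxTree fun i => B (σ.length + i),
    UMeas.isUTree_boxTree fun i => hBU _, ?_⟩, ?_⟩
  · refine eq_empty_of_forall_notMem fun s ⟨hs, hsY⟩ => hsY ?_
    rw [UMeas.branches_boxTree] at hs
    filter_upwards [eventually_ge_atTop σ.length] with j hj
    obtain ⟨i, rfl⟩ := Nat.exists_eq_add_of_le hj
    simpa only [UMeas.app_length_add] using hs i
  · rw [compl_eq_univ_sdiff, measure_sdiff_null hY, measure_univ]
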